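/- arXiv:1703.04933 — 8 statements merged into one kernel-verified Lean document; each statement's English description precedes it below -/
import Mathlib

section
/- Let (θ₁, θ₂) ∈ ℝ^{n₁} × ℝ^{n₂} with ‖θ₁‖_∞ > r > 0, and let α = 2(‖θ₁‖_∞ + r)/(‖θ₁‖_∞ − r). Then T_α(B_∞(r, θ₁) × B_∞(r, θ₂)) is disjoint from B_∞(r, θ₁) × B_∞(r, θ₂). -/
/-- The `α`-scale transformation `T_α(u,v) = (αu, α⁻¹v)`. -/
noncomputable def Tscale (n₁ n₂ : ℕ) (α : ℝ) :
    (Fin n₁ → ℝ) × (Fin n₂ → ℝ) → (Fin n₁ → ℝ) × (Fin n₂ → ℝ) :=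
  fun p => (α • p.1, α⁻¹ • p.2)

/-- For `‖θ₁‖_∞ > r > 0` and `α = 2(‖θ₁‖_∞ + r)/(‖θ₁‖_∞ − r)`, the set
`T_α(B_∞(r, θ₁) × B_∞(r, θ₂))` is disjoint from `B_∞(r, θ₁) × B_∞(r, θ₂)`. -/
theorem Tscale_image_ball_disjoint (n₁ n₂ : ℕ) (r : ℝ)
    (θ₁ : Fin n₁ → ℝ) (θ₂ : Fin n₂ → ℝ) (hr : 0 < r) (hθ : r < ‖θ₁‖) :
    Disjoint
      (Tscale n₁ n₂ (2 * (‖θ₁‖ + r) / (‖θ₁‖ - r)) ''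
        (Metric.ball θ₁ r ×ˢ Metric.ball θ₂ r))
      (Metric.ball θ₁ r ×ˢ Metric.ball θ₂ r) := by
  set α : ℝ := 2 * (‖θ₁‖ + r) / (‖θ₁‖ - r) with hα
  have hsub : 0 < ‖θ₁‖ - r := by linarith
  have hαpos : 0 < α := by positivity
  rw [Set.disjoint_left]
  rintro ⟨a, b⟩ ⟨⟨u, v⟩, ⟨hu, _⟩, heq⟩ ⟨ha, _⟩
  simp only [Tscale, Prod.mk.injEq] at heq
  obtain ⟨h1, _⟩ := heq
  -- a = α • u
  have hu' : ‖u - θ₁‖ < r := by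
    rw [Metric.mem_ball, dist_eq_norm] at hu; exact hu
  have ha' : ‖a - θ₁‖ < r := by
    rw [Metric.mem_ball, dist_eq_norm] at ha; exact ha
  have hunorm : ‖θ₁‖ - r < ‖u‖ := by
    have := norm_sub_norm_le θ₁ u
    have h2 : ‖θ₁ - u‖ < r := by rwa [norm_sub_rev] at hu'
    linarith
  have hanorm : ‖a‖ = α * ‖u‖ := by
    rw [← h1, norm_smul, Real.norm_eq_abs, abs_of_pos hαpos]
  have hbig : 2 * (‖θ₁‖ + r) < ‖a‖ := by
    rw [hanorm, hα]
    rw [div_mul_eq_mul_div, lt_div_iff₀ hsub]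
    have : 0 < 2 * (‖θ₁‖ + r) := by linarith
    calc 2 * (‖θ₁‖ + r) * (‖θ₁‖ - r) < 2 * (‖θ₁‖ + r) * ‖u‖ := by
          exact mul_lt_mul_of_pos_left hunorm this
    _ = 2 * (‖θ₁‖ + r) * ‖u‖ := rfl
  have := norm_sub_norm_le a θ₁
  linarith
end

section
/- Let (θ₁, θ₂) ∈ ℝ^{n₁} × ℝ^{n₂} with ‖θ₁‖_∞ > r > 0, let α = 2(‖θ₁‖_∞ + r)/(‖θ₁‖_∞ − r), and let B = B_∞(r, θ₁) × B_∞(r, θ₂). Then the sets T_{α^k}(B) for k ∈ ℕ are pairwise disjoint: for all natural numbers j < k, T_{α^j}(B) ∩ T_{α^k}(B) = ∅. -/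
/-- For `‖θ₁‖_∞ > r > 0`, `α = 2(‖θ₁‖_∞ + r)/(‖θ₁‖_∞ − r)` and
`B = B_∞(r, θ₁) × B_∞(r, θ₂)`, the sets `T_{α^k}(B)`, `k ∈ ℕ`, are pairwise
disjoint. -/
theorem Tscale_pow_image_ball_pairwise_disjoint (n₁ n₂ : ℕ) (r : ℝ)
    (θ₁ : Fin n₁ → ℝ) (θ₂ : Fin n₂ → ℝ) (hr : 0 < r) (hθ : r < ‖θ₁‖)
    (j k : ℕ) (hjk : j < k) :
    Disjoint
      (Tscale n₁ n₂ ((2 * (‖θ₁‖ + r) / (‖θ₁‖ - r)) ^ j) ''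
        (Metric.ball θ₁ r ×ˢ Metric.ball θ₂ r))
      (Tscale n₁ n₂ ((2 * (‖θ₁‖ + r) / (‖θ₁‖ - r)) ^ k) ''
        (Metric.ball θ₁ r ×ˢ Metric.ball θ₂ r)) := by
  set M := ‖θ₁‖ with hM
  set α := 2 * (M + r) / (M - r) with hα
  have hMr : 0 < M - r := by linarith
  have hMr' : 0 < M + r := by linarith
  have hα2 : 2 ≤ α := by
    rw [hα, le_div_iff₀ hMr]; linarith
  have hα1 : 1 < α := by linarith
  have hαpos : 0 < α := by linarith
  have hkey : α ^ j * (M + r) ≤ α ^ k * (M - r) := by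
    have h1 : α ^ (j + 1) ≤ α ^ k := pow_le_pow_right₀ (le_of_lt hα1) hjk
    have h2 : α ^ j * (M + r) ≤ α ^ (j + 1) * (M - r) := by
      rw [pow_succ, mul_assoc]
      have : M + r ≤ α * (M - r) := by
        rw [hα, div_mul_cancel₀ _ (ne_of_gt hMr)]; linarith
      exact mul_le_mul_of_nonneg_left this (le_of_lt (pow_pos hαpos j))
    exact h2.trans (mul_le_mul_of_nonneg_right h1 (le_of_lt hMr))
  rw [Set.disjoint_left]
  rintro p ⟨x, ⟨hx1, _⟩, hpx⟩ ⟨y, ⟨hy1, _⟩, hpy⟩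
  have hnorm : ∀ (z : Fin n₁ → ℝ), z ∈ Metric.ball θ₁ r →
      M - r < ‖z‖ ∧ ‖z‖ < M + r := by
    intro z hz
    rw [Metric.mem_ball, dist_eq_norm] at hz
    constructor
    · have := norm_sub_norm_le θ₁ z
      rw [show θ₁ - z = -(z - θ₁) by ring, norm_neg] at this
      linarith
    · have := norm_le_norm_add_norm_sub' z θ₁
      linarith
  obtain ⟨hx1l, hx1u⟩ := hnorm _ hx1
  obtain ⟨hy1l, hy1u⟩ := hnorm _ hy1
  have hp1 : ‖p.1‖ = α ^ j * ‖x.1‖ := by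
    rw [← hpx]
    simp [Tscale, norm_smul, abs_pow, abs_of_pos hαpos]
  have hp1' : ‖p.1‖ = α ^ k * ‖y.1‖ := by
    rw [← hpy]
    simp [Tscale, norm_smul, abs_pow, abs_of_pos hαpos]
  have h1 : ‖p.1‖ < α ^ j * (M + r) := by
    rw [hp1]
    exact mul_lt_mul_of_pos_left hx1u (pow_pos hαpos j)
  have h2 : α ^ k * (M - r) < ‖p.1‖ := by
    rw [hp1']
    exact mul_lt_mul_of_pos_left hy1l (pow_pos hαpos k)
  linarith
end

section
/- Let L : ℝ^{n₁} × ℝ^{n₂} → ℝ be continuous and invariant under all α-scale transformations, i.e., L(αu, α⁻¹v) = L(u, v) for all α > 0 and all (u, v). Let θ = (θ₁, θ₂) with θ₁ ≠ 0 and θ₂ ≠ 0. Then for every ε > 0, the connected component containing θ of the set {θ' : L(θ') < L(θ) + ε} has infinite Lebesgue measure. -/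
/-!
The sublevel set `S = {L < L θ + ε}` is open and invariant under every `T_α`, so it contains the
orbit `⋃_{α > 0} T_α B` of a small ball `B` around `θ`. This orbit is connected, being a
continuous image of `(0, ∞) × B`, hence lies in the component of `θ`. On a product of balls
`T_α` multiplies volume by `α ^ (n₁ - n₂)`, and along a geometric sequence of ratio `4` or `1/4`
(whichever makes this factor at least `1`) the images `T_α B` are pairwise disjoint, because
their first factors are balls around the far apart points `α θ₁ ≠ 0`. So the orbit has infinite
volume.
-/

open MeasureTheory Metric Set Module Function
open scoped Pointwise

section Scaling

variable {E F : Type*}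

noncomputable def scaleTransform [SMul ℝ E] [SMul ℝ F] (α : ℝ) (p : E × F) : E × F :=
  (α • p.1, α⁻¹ • p.2)

def scaleOrbit [SMul ℝ E] [SMul ℝ F] (B : Set (E × F)) : Set (E × F) :=
  (fun q : ℝ × (E × F) => scaleTransform q.1 q.2) '' (Ioi 0 ×ˢ B)

variable [AddCommGroup E] [Module ℝ E] [AddCommGroup F] [Module ℝ F]

theorem isPreconnected_scaleOrbit [TopologicalSpace E] [ContinuousSMul ℝ E]
    [TopologicalSpace F] [ContinuousSMul ℝ F] {B : Set (E × F)} (hB : IsPreconnected B) :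
    IsPreconnected (scaleOrbit B) := by
  refine (isPreconnected_Ioi.prod hB).image _ ?_
  have hinv : ContinuousOn (fun q : ℝ × (E × F) => q.1⁻¹) (Ioi 0 ×ˢ B) :=
    continuousOn_fst.inv₀ fun q hq => (mem_Ioi.mp hq.1).ne'
  unfold scaleTransform
  fun_prop

theorem mem_scaleOrbit {B : Set (E × F)} {α : ℝ} (hα : 0 < α) {p : E × F} (hp : p ∈ B) :
    scaleTransform α p ∈ scaleOrbit B :=
  ⟨(α, p), ⟨hα, hp⟩, rfl⟩

theorem scaleOrbit_subset {B S : Set (E × F)}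
    (hS : ∀ α : ℝ, 0 < α → ∀ p ∈ S, scaleTransform α p ∈ S) (hB : B ⊆ S) :
    scaleOrbit B ⊆ S := by
  rintro _ ⟨⟨α, p⟩, ⟨hα, hp⟩, rfl⟩
  exact hS α hα p (hB hp)

theorem scaleOrbit_mono {B C : Set (E × F)} (h : B ⊆ C) : scaleOrbit B ⊆ scaleOrbit C :=
  image_mono (prod_mono subset_rfl h)

theorem smul_prod_inv_smul_subset_scaleOrbit {A : Set E} {B : Set F} {α : ℝ} (hα : 0 < α) :
    (α • A) ×ˢ (α⁻¹ • B) ⊆ scaleOrbit (A ×ˢ B) := by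
  rintro ⟨u, v⟩ ⟨⟨x, hx, rfl⟩, ⟨y, hy, rfl⟩⟩
  exact mem_scaleOrbit hα (mk_mem_prod hx hy)

end Scaling

theorem disjoint_smul_ball_of_three_mul_le {E : Type*} [NormedAddCommGroup E] [NormedSpace ℝ E]
    {x : E} {r α β : ℝ} (hx : 2 * r ≤ ‖x‖) (hα : 0 < α) (hαβ : 3 * α ≤ β) :
    Disjoint (α • ball x r) (β • ball x r) := by
  rcases le_or_gt r 0 with hr | hr
  · simp [ball_eq_empty.mpr hr]
  have hβ : 0 < β := by linarith
  rw [_root_.smul_ball hα.ne', _root_.smul_ball hβ.ne', Real.norm_of_nonneg hα.le,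
    Real.norm_of_nonneg hβ.le]
  refine ball_disjoint_ball ?_
  rw [dist_eq_norm, ← sub_smul, norm_smul, Real.norm_of_nonpos (by linarith)]
  nlinarith

theorem measure_iUnion_eq_top_of_pairwise_disjoint {Ω ι : Type*} [MeasurableSpace Ω]
    [Countable ι] [Infinite ι] {μ : Measure Ω} {s : ι → Set Ω}
    (hd : Pairwise (Disjoint on s)) (hs : ∀ i, MeasurableSet (s i))
    {c : ENNReal} (hc : c ≠ 0) (hle : ∀ i, c ≤ μ (s i)) : μ (⋃ i, s i) = ⊤ := by
  rw [measure_iUnion hd hs, ← top_le_iff, ← ENNReal.tsum_const_eq_top_of_ne_zero (α := ι) hc]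
  exact ENNReal.tsum_le_tsum hle

theorem exists_sparse_seq_one_le_pow_mul_inv_pow (m n : ℕ) :
    ∃ a : ℕ → ℝ, (∀ k, 0 < a k) ∧ (∀ j k, j < k → 3 * a j ≤ a k ∨ 3 * a k ≤ a j) ∧
      ∀ k, 1 ≤ a k ^ m * (a k)⁻¹ ^ n := by
  have hsep {j k : ℕ} (h : j < k) : (3 : ℝ) * 4 ^ j ≤ 4 ^ k :=
    calc (3 : ℝ) * 4 ^ j ≤ 4 ^ (j + 1) := by rw [pow_succ]; linarith [pow_pos (four_pos (α := ℝ)) j]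
      _ ≤ 4 ^ k := pow_le_pow_right₀ (by norm_num) h
  rcases le_or_gt n m with h | h
  · refine ⟨fun k => 4 ^ k, fun k => by positivity, fun j k hjk => .inl (hsep hjk), fun k => ?_⟩
    rw [inv_pow, ← div_eq_mul_inv, one_le_div (by positivity)]
    exact pow_le_pow_right₀ (one_le_pow₀ (by norm_num)) h
  · refine ⟨fun k => (4 ^ k)⁻¹, fun k => by positivity, fun j k hjk => .inr ?_, fun k => ?_⟩
    · rw [← div_eq_mul_inv, div_le_iff₀ (by positivity), ← div_eq_inv_mul,
        le_div_iff₀ (by positivity)]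
      exact hsep hjk
    · rw [inv_inv, inv_pow, ← div_eq_inv_mul, one_le_div (by positivity)]
      exact pow_le_pow_right₀ (one_le_pow₀ (by norm_num)) h.le

section MeasureOrbit

variable {E F : Type*}
  [NormedAddCommGroup E] [NormedSpace ℝ E] [FiniteDimensional ℝ E]
  [MeasurableSpace E] [BorelSpace E]
  [NormedAddCommGroup F] [NormedSpace ℝ F] [FiniteDimensional ℝ F]
  [MeasurableSpace F] [BorelSpace F]
  (μ : Measure E) [μ.IsAddHaarMeasure] (ν : Measure F) [ν.IsAddHaarMeasure]

theorem measure_prod_smul_prod_inv_smul {α : ℝ} (hα : 0 < α) (A : Set E) (B : Set F) :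
    μ.prod ν ((α • A) ×ˢ (α⁻¹ • B)) =
      ENNReal.ofReal (α ^ finrank ℝ E * α⁻¹ ^ finrank ℝ F) * μ.prod ν (A ×ˢ B) := by
  rw [Measure.prod_prod, Measure.prod_prod, Measure.addHaar_smul, Measure.addHaar_smul,
    abs_of_pos (by positivity), abs_of_pos (by positivity), ENNReal.ofReal_mul (by positivity)]
  ring

theorem measure_scaleOrbit_ball_prod_eq_top {x : E} {y : F} {r : ℝ} (hr : 0 < r)
    (hx : 2 * r ≤ ‖x‖) : μ.prod ν (scaleOrbit (ball x r ×ˢ ball y r)) = ⊤ := by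
  obtain ⟨a, ha, hsep, hgrow⟩ :=
    exists_sparse_seq_one_le_pow_mul_inv_pow (finrank ℝ E) (finrank ℝ F)
  set V : ℕ → Set (E × F) := fun k => (a k • ball x r) ×ˢ ((a k)⁻¹ • ball y r)
  have hdisj : Pairwise (Disjoint on V) := by
    refine (pairwise_disjoint_on V).mpr fun j k hjk => ?_
    rcases hsep j k hjk with h | h
    · exact (disjoint_smul_ball_of_three_mul_le hx (ha j) h).set_prod_left _ _
    · exact (disjoint_smul_ball_of_three_mul_le hx (ha k) h).symm.set_prod_left _ _
  have hmeas (k : ℕ) : MeasurableSet (V k) :=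
    (isOpen_ball.smul₀ (ha k).ne').measurableSet.prod
      (isOpen_ball.smul₀ (inv_ne_zero (ha k).ne')).measurableSet
  have hpos : μ.prod ν (ball x r ×ˢ ball y r) ≠ 0 := by
    rw [Measure.prod_prod]
    exact mul_ne_zero (measure_ball_pos μ x hr).ne' (measure_ball_pos ν y hr).ne'
  have hle (k : ℕ) : μ.prod ν (ball x r ×ˢ ball y r) ≤ μ.prod ν (V k) := by
    rw [measure_prod_smul_prod_inv_smul μ ν (ha k)]
    exact le_mul_of_one_le_left zero_le (ENNReal.one_le_ofReal.mpr (hgrow k))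
  exact measure_mono_top (iUnion_subset fun k => smul_prod_inv_smul_subset_scaleOrbit (ha k))
    (measure_iUnion_eq_top_of_pairwise_disjoint hdisj hmeas hpos hle)

theorem measure_scaleOrbit_eq_top {B : Set (E × F)} (hB : IsOpen B) {x : E} {y : F}
    (hxy : (x, y) ∈ B) (hx : x ≠ 0) : μ.prod ν (scaleOrbit B) = ⊤ := by
  obtain ⟨r, hr, hball⟩ := Metric.isOpen_iff.mp hB (x, y) hxy
  have hr' : 0 < min r (‖x‖ / 2) := lt_min hr (by simpa using hx)
  have hrx : 2 * min r (‖x‖ / 2) ≤ ‖x‖ := by linarith [min_le_right r (‖x‖ / 2)]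
  refine measure_mono_top (scaleOrbit_mono ?_)
    (measure_scaleOrbit_ball_prod_eq_top μ ν (y := y) hr' hrx)
  rw [ball_prod_same]
  exact (ball_subset_ball (min_le_left _ _)).trans hball

end MeasureOrbit

theorem volume_flatness_infinite_general (n₁ n₂ : ℕ)
    (L : (Fin n₁ → ℝ) × (Fin n₂ → ℝ) → ℝ) (hcont : Continuous L)
    (hinv : ∀ α : ℝ, 0 < α → ∀ (u : Fin n₁ → ℝ) (v : Fin n₂ → ℝ),
      L (α • u, α⁻¹ • v) = L (u, v))
    (θ₁ : Fin n₁ → ℝ) (θ₂ : Fin n₂ → ℝ) (h₁ : θ₁ ≠ 0)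
    (ε : ℝ) (hε : 0 < ε) :
    volume (connectedComponentIn {θ' | L θ' < L (θ₁, θ₂) + ε} (θ₁, θ₂)) = ⊤ := by
  set S := {θ' | L θ' < L (θ₁, θ₂) + ε}
  have hθS : (θ₁, θ₂) ∈ S := show L (θ₁, θ₂) < L (θ₁, θ₂) + ε by linarith
  obtain ⟨δ, hδ, hball⟩ := Metric.isOpen_iff.mp (isOpen_lt hcont continuous_const) _ hθS
  have hS : ∀ α : ℝ, 0 < α → ∀ p ∈ S, scaleTransform α p ∈ S := by
    rintro α hα ⟨u, v⟩ hp
    simpa [S, scaleTransform, hinv α hα] using hp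
  have horbit : scaleOrbit (ball (θ₁, θ₂) δ) ⊆ connectedComponentIn S (θ₁, θ₂) :=
    (isPreconnected_scaleOrbit (convex_ball _ δ).isPreconnected).subset_connectedComponentIn
      (by simpa [scaleTransform] using mem_scaleOrbit one_pos (mem_ball_self hδ))
      (scaleOrbit_subset hS hball)
  refine measure_mono_top horbit ?_
  rw [Measure.volume_eq_prod]
  exact measure_scaleOrbit_eq_top volume volume isOpen_ball (mem_ball_self hδ) h₁

/-- If the loss `L` is continuous and invariant under all `α`-scale
transformations, then for every minimum `θ = (θ₁, θ₂)` with `θ₁ ≠ 0` and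
`θ₂ ≠ 0` and every `ε > 0`, the connected component containing `θ` of the set
`{θ' | L θ' < L θ + ε}` has infinite Lebesgue measure (infinite volume
`ε`-flatness). -/
theorem volume_flatness_infinite (n₁ n₂ : ℕ)
    (L : (Fin n₁ → ℝ) × (Fin n₂ → ℝ) → ℝ) (hcont : Continuous L)
    (hinv : ∀ α : ℝ, 0 < α → ∀ (u : Fin n₁ → ℝ) (v : Fin n₂ → ℝ),
      L (α • u, α⁻¹ • v) = L (u, v))
    (θ₁ : Fin n₁ → ℝ) (θ₂ : Fin n₂ → ℝ) (h₁ : θ₁ ≠ 0) (h₂ : θ₂ ≠ 0)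
    (ε : ℝ) (hε : 0 < ε) :
    volume (connectedComponentIn {θ' | L θ' < L (θ₁, θ₂) + ε} (θ₁, θ₂)) = ⊤ :=
  volume_flatness_infinite_general n₁ n₂ L hcont hinv θ₁ θ₂ h₁ ε hε
end

section
/- Let L : ℝ^{n₁} × ℝ^{n₂} → ℝ be twice differentiable and invariant under all α-scale transformations, and let θ = (θ₁, θ₂) be a point where the Hessian of L is positive semi-definite and nonzero. Then for every M > 0 there exists α > 0 such that the operator norm of the Hessian of L at T_α(θ) = (αθ₁, α⁻¹θ₂) is at least M. -/
/-- The parameter space `ℝ^{n₁} × ℝ^{n₂}` with the Euclidean (`ℓ²`) norm on the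
concatenated vector. -/
abbrev Param (n₁ n₂ : ℕ) :=
  WithLp 2 (EuclideanSpace ℝ (Fin n₁) × EuclideanSpace ℝ (Fin n₂))

/-- Builds a parameter from its two components. -/
noncomputable def Param.mk {n₁ n₂ : ℕ}
    (u : EuclideanSpace ℝ (Fin n₁)) (v : EuclideanSpace ℝ (Fin n₂)) :
    Param n₁ n₂ :=
  (WithLp.equiv 2 (EuclideanSpace ℝ (Fin n₁) × EuclideanSpace ℝ (Fin n₂))).symm (u, v)

/-!
Differentiating `L ∘ T_α = L` twice gives `D²L(T_α θ)(T_α w, T_α w) = D²L(θ)(w, w)`.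
The Hessian `D²L(θ)` is symmetric, positive semi-definite and nonzero, so `D²L(θ)(w, w) > 0`
for some `w`; and since a positive semi-definite form vanishing on `(u, 0)` and on `(0, v)`
vanishes on `(u, v)`, such a `w` can be taken of the form `(u, 0)` or `(0, v)`.
Then `T_α w` is `α w` resp. `α⁻¹ w`, so `D²L(T_α θ)(w, w)` is `α⁻² D²L(θ)(w, w)` resp.
`α² D²L(θ)(w, w)`, which is unbounded as `α → 0` resp. `α → ∞`.
-/

open Filter

section Calculus

variable {𝕜 E F : Type*} [NontriviallyNormedField 𝕜] [NormedAddCommGroup E] [NormedSpace 𝕜 E]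
  [NormedAddCommGroup F] [NormedSpace 𝕜 F]

theorem fderiv_fderiv_map_apply_map_of_comp_eq {f : E → F} (S : E →L[𝕜] E) (hfS : f ∘ S = f)
    (hf : Differentiable 𝕜 f) {x : E} (hf' : DifferentiableAt 𝕜 (fderiv 𝕜 f) (S x)) (v w : E) :
    fderiv 𝕜 (fderiv 𝕜 f) (S x) (S v) (S w) = fderiv 𝕜 (fderiv 𝕜 f) x v w := by
  have hD : fderiv 𝕜 f = fun y => (fderiv 𝕜 f (S y)).comp S := by
    funext y
    conv_lhs => rw [← hfS]
    rw [fderiv_comp y (hf _) S.differentiableAt, S.fderiv]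
  have h := (hf'.hasFDerivAt.comp x S.hasFDerivAt).clm_comp (hasFDerivAt_const S x)
  simp only [Function.comp_apply, ← hD] at h
  simp [h.fderiv]

theorem sq_smul_fderiv_fderiv_map_apply_of_map_eq_smul {f : E → F} (S : E →L[𝕜] E)
    (hfS : f ∘ S = f) (hf : Differentiable 𝕜 f) {x : E}
    (hf' : DifferentiableAt 𝕜 (fderiv 𝕜 f) (S x)) {c : 𝕜} {z : E} (hz : S z = c • z) :
    c ^ 2 • fderiv 𝕜 (fderiv 𝕜 f) (S x) z z = fderiv 𝕜 (fderiv 𝕜 f) x z z := by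
  rw [← fderiv_fderiv_map_apply_map_of_comp_eq S hfS hf hf', hz, map_smul, map_smul,
    smul_apply, smul_smul, sq]

end Calculus

namespace ContinuousLinearMap

variable {E : Type*} [NormedAddCommGroup E] [NormedSpace ℝ E]

theorem exists_pos_apply_self (B : E →L[ℝ] E →L[ℝ] ℝ) (hsymm : ∀ v w, B v w = B w v)
    (hpsd : ∀ v, 0 ≤ B v v) (hB : B ≠ 0) : ∃ v, 0 < B v v := by
  by_contra! h
  have hzero : ∀ v, B v v = 0 := fun v => le_antisymm (h v) (hpsd v)
  refine hB (ext fun v => ext fun w => ?_)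
  have hvw := hzero (v + w)
  simp only [map_add, add_apply, hzero, hsymm w v] at hvw
  simp only [zero_apply]
  linarith

theorem pos_apply_self_or_pos_apply_self_of_pos_apply_add (B : E →L[ℝ] E →L[ℝ] ℝ)
    (hpsd : ∀ v, 0 ≤ B v v) {v w : E} (h : 0 < B (v + w) (v + w)) :
    0 < B v v ∨ 0 < B w w := by
  by_contra! hvw
  have hv : B v v = 0 := le_antisymm hvw.1 (hpsd v)
  have hw : B w w = 0 := le_antisymm hvw.2 (hpsd w)
  have hsub := hpsd (v - w)
  simp only [map_add, map_sub, add_apply, sub_apply, hv, hw] at h hsub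
  linarith

theorem exists_le_opNorm_of_inv_sq_mul_apply_self (B : ℝ → E →L[ℝ] E →L[ℝ] ℝ) {z : E} {d : ℝ}
    (hd : 0 < d) (h : ∀ β > 0, β⁻¹ ^ 2 * B β z z = d) (M : ℝ) :
    ∃ β > 0, M ≤ ‖B β‖ := by
  have hz : z ≠ 0 := by
    rintro rfl
    simpa [hd.ne] using h 1 one_pos
  have hz' : 0 < ‖z‖ ^ 2 := by positivity
  have hbound : ∀ β > 0, d / ‖z‖ ^ 2 * β ^ 2 ≤ ‖B β‖ := by
    intro β hβ
    have hle : B β z z ≤ ‖B β‖ * ‖z‖ * ‖z‖ := (le_abs_self _).trans ((B β).le_opNorm₂ z z)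
    calc d / ‖z‖ ^ 2 * β ^ 2 = B β z z / ‖z‖ ^ 2 := by rw [← h β hβ]; field_simp
      _ ≤ ‖B β‖ := by rw [div_le_iff₀ hz', sq, ← mul_assoc]; exact hle
  have hlim : Tendsto (fun β : ℝ => d / ‖z‖ ^ 2 * β ^ 2) atTop atTop :=
    (tendsto_pow_atTop two_ne_zero).const_mul_atTop (by positivity)
  obtain ⟨β, hβ, hM⟩ := ((eventually_gt_atTop 0).and (hlim.eventually_ge_atTop M)).exists
  exact ⟨β, hβ, hM.trans (hbound β hβ)⟩

end ContinuousLinearMap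

namespace WithLp

variable (p : ENNReal) {𝕜 E F : Type*} [CommSemiring 𝕜] [AddCommGroup E] [Module 𝕜 E]
  [TopologicalSpace E] [ContinuousConstSMul 𝕜 E] [AddCommGroup F] [Module 𝕜 F]
  [TopologicalSpace F] [ContinuousConstSMul 𝕜 F]

/-- The scale transformation `T_α` is `prodScale 2 α α⁻¹`. -/
noncomputable def prodScale (a b : 𝕜) : WithLp p (E × F) →L[𝕜] WithLp p (E × F) :=
  (prodContinuousLinearEquiv p 𝕜 E F).symm.toContinuousLinearMap ∘L
    ((a • ContinuousLinearMap.id 𝕜 E).prodMap (b • ContinuousLinearMap.id 𝕜 F)) ∘L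
      (prodContinuousLinearEquiv p 𝕜 E F).toContinuousLinearMap

@[simp]
theorem prodScale_toLp (a b : 𝕜) (u : E) (v : F) :
    prodScale p a b (toLp p (u, v)) = toLp p (a • u, b • v) := rfl

theorem prodScale_toLp_zero_right (a b : 𝕜) (u : E) :
    prodScale p a b (toLp p (u, (0 : F))) = a • toLp p (u, (0 : F)) := by
  simp [← toLp_smul]

theorem prodScale_toLp_zero_left (a b : 𝕜) (v : F) :
    prodScale p a b (toLp p ((0 : E), v)) = b • toLp p ((0 : E), v) := by
  simp [← toLp_smul]

end WithLp

theorem hessian_operator_norm_unbounded_general (n₁ n₂ : ℕ) (L : Param n₁ n₂ → ℝ)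
    (hdiff : Differentiable ℝ L) (hdiff2 : Differentiable ℝ (fderiv ℝ L))
    (hinv : ∀ α : ℝ, 0 < α → ∀ (u : EuclideanSpace ℝ (Fin n₁))
      (v : EuclideanSpace ℝ (Fin n₂)),
      L (Param.mk (α • u) (α⁻¹ • v)) = L (Param.mk u v))
    (θ₁ : EuclideanSpace ℝ (Fin n₁)) (θ₂ : EuclideanSpace ℝ (Fin n₂))
    (hpsd : ∀ w : Param n₁ n₂, 0 ≤ fderiv ℝ (fderiv ℝ L) (Param.mk θ₁ θ₂) w w)
    (hnz : fderiv ℝ (fderiv ℝ L) (Param.mk θ₁ θ₂) ≠ 0)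
    (M : ℝ) :
    ∃ α : ℝ, 0 < α ∧
      M ≤ ‖fderiv ℝ (fderiv ℝ L) (Param.mk (α • θ₁) (α⁻¹ • θ₂))‖ := by
  set H := fderiv ℝ (fderiv ℝ L)
  have hscale : ∀ α : ℝ, 0 < α → ∀ {c : ℝ} {z : Param n₁ n₂},
      WithLp.prodScale 2 α α⁻¹ z = c • z →
      c ^ 2 * H (Param.mk (α • θ₁) (α⁻¹ • θ₂)) z z = H (Param.mk θ₁ θ₂) z z :=
    fun α hα _ _ hz => sq_smul_fderiv_fderiv_map_apply_of_map_eq_smul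
      (WithLp.prodScale 2 α α⁻¹)
      (funext fun x => hinv α hα x.fst x.snd : L ∘ WithLp.prodScale 2 α α⁻¹ = L)
      hdiff (x := Param.mk θ₁ θ₂) (hdiff2 _) hz
  have hsymm : ∀ v w, H (Param.mk θ₁ θ₂) v w = H (Param.mk θ₁ θ₂) w v :=
    second_derivative_symmetric (fun y => (hdiff y).hasFDerivAt) (hdiff2 _).hasFDerivAt
  obtain ⟨w, hw⟩ := ContinuousLinearMap.exists_pos_apply_self _ hsymm hpsd hnz
  have hsplit : w = WithLp.toLp 2 (w.fst, 0) + WithLp.toLp 2 (0, w.snd) := by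
    rw [← WithLp.toLp_add, Prod.mk_add_mk, add_zero, zero_add]; rfl
  rcases ContinuousLinearMap.pos_apply_self_or_pos_apply_self_of_pos_apply_add _ hpsd
    (hsplit ▸ hw) with hfst | hsnd
  · obtain ⟨β, hβ, hM⟩ := ContinuousLinearMap.exists_le_opNorm_of_inv_sq_mul_apply_self
      (fun β => H (Param.mk (β⁻¹ • θ₁) (β⁻¹⁻¹ • θ₂))) hfst
      (fun β hβ => hscale β⁻¹ (inv_pos.2 hβ) (WithLp.prodScale_toLp_zero_right 2 _ _ _)) M
    exact ⟨β⁻¹, inv_pos.2 hβ, hM⟩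
  · exact ContinuousLinearMap.exists_le_opNorm_of_inv_sq_mul_apply_self
      (fun β => H (Param.mk (β • θ₁) (β⁻¹ • θ₂))) hsnd
      (fun β hβ => hscale β hβ (WithLp.prodScale_toLp_zero_left 2 _ _ _)) M

/-- If `L` is twice differentiable, invariant under all `α`-scale
transformations, and its Hessian at `θ = (θ₁, θ₂)` is positive semi-definite
and nonzero, then for every `M > 0` there is `α > 0` such that the operator
norm of the Hessian of `L` at `T_α(θ) = (αθ₁, α⁻¹θ₂)` is at least `M`. -/
theorem hessian_operator_norm_unbounded (n₁ n₂ : ℕ) (L : Param n₁ n₂ → ℝ)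
    (hdiff : Differentiable ℝ L) (hdiff2 : Differentiable ℝ (fderiv ℝ L))
    (hinv : ∀ α : ℝ, 0 < α → ∀ (u : EuclideanSpace ℝ (Fin n₁))
      (v : EuclideanSpace ℝ (Fin n₂)),
      L (Param.mk (α • u) (α⁻¹ • v)) = L (Param.mk u v))
    (θ₁ : EuclideanSpace ℝ (Fin n₁)) (θ₂ : EuclideanSpace ℝ (Fin n₂))
    (hpsd : ∀ w : Param n₁ n₂, 0 ≤ fderiv ℝ (fderiv ℝ L) (Param.mk θ₁ θ₂) w w)
    (hnz : fderiv ℝ (fderiv ℝ L) (Param.mk θ₁ θ₂) ≠ 0)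
    (M : ℝ) (hM : 0 < M) :
    ∃ α : ℝ, 0 < α ∧
      M ≤ ‖fderiv ℝ (fderiv ℝ L) (Param.mk (α • θ₁) (α⁻¹ • θ₂))‖ :=
  hessian_operator_norm_unbounded_general n₁ n₂ L hdiff hdiff2 hinv θ₁ θ₂ hpsd hnz M
end

section
/- Let L : ℝ^{n₁} × ℝ^{n₂} → ℝ be twice differentiable and invariant under all α-scale transformations, and let θ = (θ₁, θ₂) be a point where the Hessian of L is positive semi-definite and nonzero. Then for every M > 0 there exists α > 0 such that the trace of the Hessian matrix of L at T_α(θ) = (αθ₁, α⁻¹θ₂) is at least M. -/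
open Filter Topology

section SecondDerivative

variable {𝕜 E F : Type*} [NontriviallyNormedField 𝕜] [NormedAddCommGroup E] [NormedSpace 𝕜 E]
  [NormedAddCommGroup F] [NormedSpace 𝕜 F]

theorem fderiv_fderiv_map_apply_of_comp_eq {f : E → F} {T : E →L[𝕜] E}
    (hf : Differentiable 𝕜 f) (hf' : Differentiable 𝕜 (fderiv 𝕜 f)) (hT : f ∘ T = f)
    (x v w : E) :
    fderiv 𝕜 (fderiv 𝕜 f) (T x) (T v) (T w) = fderiv 𝕜 (fderiv 𝕜 f) x v w := by
  set precompT := (ContinuousLinearMap.compL 𝕜 E E F).flip T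
  have hfirst : fderiv 𝕜 f = precompT ∘ fderiv 𝕜 f ∘ T := funext fun y => by
    conv_lhs => rw [← hT]
    simp [precompT, fderiv_comp y (hf (T y)) T.differentiableAt, T.fderiv]
  have hsecond : fderiv 𝕜 (fderiv 𝕜 f) x
      = precompT ∘L fderiv 𝕜 (fderiv 𝕜 f) (T x) ∘L T := by
    conv_lhs => rw [hfirst]
    rw [fderiv_comp x precompT.differentiableAt ((hf' (T x)).comp x T.differentiableAt),
      fderiv_comp x (hf' (T x)) T.differentiableAt, precompT.fderiv, T.fderiv]
  simp [hsecond, precompT]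

end SecondDerivative

namespace ContinuousLinearMap

variable {E ι : Type*} [NormedAddCommGroup E] [NormedSpace ℝ E] {H : E →L[ℝ] E →L[ℝ] ℝ}

theorem apply_eq_zero_of_apply_self_eq_zero (hsymm : ∀ v w, H v w = H w v)
    (hpsd : ∀ v, 0 ≤ H v v) {p q : E} (hp : H p p = 0) (hq : H q q = 0) : H p q = 0 := by
  have hadd := hpsd (p + q)
  have hsub := hpsd (p - q)
  simp only [map_add, map_sub, add_apply, sub_apply, hp, hq, hsymm q p] at hadd hsub
  linarith

theorem sum_apply_basis_self_pos [Fintype ι] (hsymm : ∀ v w, H v w = H w v)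
    (hpsd : ∀ v, 0 ≤ H v v) (hH : H ≠ 0) (b : Module.Basis ι ℝ E) :
    0 < ∑ i, H (b i) (b i) := by
  refine (Finset.sum_nonneg fun i _ => hpsd (b i)).lt_of_ne fun hsum => hH ?_
  have hdiag : ∀ i, H (b i) (b i) = 0 := fun i =>
    (Finset.sum_eq_zero_iff_of_nonneg fun i _ => hpsd (b i)).mp hsum.symm i (Finset.mem_univ i)
  rw [← toLinearMap₁₂_inj]
  exact LinearMap.ext_basis b b fun i j =>
    apply_eq_zero_of_apply_self_eq_zero hsymm hpsd (hdiag i) (hdiag j)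

end ContinuousLinearMap

theorem exists_le_inv_sq_mul_add_sq_mul {A B : ℝ} (hA : 0 ≤ A) (hB : 0 ≤ B) (hAB : 0 < A + B)
    (M : ℝ) : ∃ α > 0, M ≤ α⁻¹ ^ 2 * A + α ^ 2 * B := by
  rcases hA.lt_or_eq with hA | rfl
  · have hlim : Tendsto (fun α : ℝ => α⁻¹ ^ 2 * A) (𝓝[>] 0) atTop :=
      ((tendsto_pow_atTop two_ne_zero).comp tendsto_inv_nhdsGT_zero).atTop_mul_const hA
    obtain ⟨α, hαM, hα⟩ :=
      ((hlim.eventually_ge_atTop M).and self_mem_nhdsWithin).exists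
    exact ⟨α, hα, hαM.trans (le_add_of_nonneg_right (by positivity))⟩
  · have hlim : Tendsto (fun α : ℝ => α ^ 2 * B) atTop atTop :=
      (tendsto_pow_atTop two_ne_zero).atTop_mul_const (by linarith)
    obtain ⟨α, hαM, hα⟩ := ((hlim.eventually_ge_atTop M).and (eventually_gt_atTop 0)).exists
    exact ⟨α, hα, by simpa using hαM⟩

namespace Param

variable {n₁ n₂ : ℕ}

theorem smul_mk (c : ℝ) (u : EuclideanSpace ℝ (Fin n₁)) (v : EuclideanSpace ℝ (Fin n₂)) :
    c • mk u v = mk (c • u) (c • v) := rfl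

variable (n₁ n₂) in
noncomputable def scale (α : ℝ) : Param n₁ n₂ →L[ℝ] Param n₁ n₂ :=
  (WithLp.prodContinuousLinearEquiv 2 ℝ _ _).symm.toContinuousLinearMap ∘L
    ((α • ContinuousLinearMap.id ℝ _).prodMap (α⁻¹ • ContinuousLinearMap.id ℝ _)) ∘L
    (WithLp.prodContinuousLinearEquiv 2 ℝ _ _).toContinuousLinearMap

theorem scale_mk (α : ℝ) (u : EuclideanSpace ℝ (Fin n₁)) (v : EuclideanSpace ℝ (Fin n₂)) :
    scale n₁ n₂ α (mk u v) = mk (α • u) (α⁻¹ • v) := rfl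

variable (n₁ n₂) in
noncomputable def stdBasis : Module.Basis (Fin n₁ ⊕ Fin n₂) ℝ (Param n₁ n₂) :=
  ((EuclideanSpace.basisFun (Fin n₁) ℝ).toBasis.prod
    (EuclideanSpace.basisFun (Fin n₂) ℝ).toBasis).map (WithLp.linearEquiv 2 ℝ _).symm

theorem stdBasis_inl (i : Fin n₁) :
    stdBasis n₁ n₂ (.inl i) = (mk (EuclideanSpace.single i 1) 0 : Param n₁ n₂) := by
  simp [stdBasis, mk]

theorem stdBasis_inr (j : Fin n₂) :
    stdBasis n₁ n₂ (.inr j) = (mk 0 (EuclideanSpace.single j 1) : Param n₁ n₂) := by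
  simp [stdBasis, mk]

variable {L : Param n₁ n₂ → ℝ}

theorem fderiv_fderiv_mk_smul_inv_smul (hdiff : Differentiable ℝ L)
    (hdiff2 : Differentiable ℝ (fderiv ℝ L))
    (hinv : ∀ α : ℝ, 0 < α → ∀ (u : EuclideanSpace ℝ (Fin n₁)) (v : EuclideanSpace ℝ (Fin n₂)),
      L (mk (α • u) (α⁻¹ • v)) = L (mk u v))
    {α : ℝ} (hα : 0 < α) (θ₁ u u' : EuclideanSpace ℝ (Fin n₁))
    (θ₂ v v' : EuclideanSpace ℝ (Fin n₂)) :
    fderiv ℝ (fderiv ℝ L) (mk (α • θ₁) (α⁻¹ • θ₂)) (mk u v) (mk u' v') =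
      fderiv ℝ (fderiv ℝ L) (mk θ₁ θ₂) (mk (α⁻¹ • u) (α • v)) (mk (α⁻¹ • u') (α • v')) := by
  have hT : L ∘ scale n₁ n₂ α = L := funext fun x => hinv α hα _ _
  have hTmk : ∀ (u : EuclideanSpace ℝ (Fin n₁)) (v : EuclideanSpace ℝ (Fin n₂)),
      scale n₁ n₂ α (mk (α⁻¹ • u) (α • v)) = mk u v := fun u v => by
    simp [scale_mk, smul_smul, hα.ne']
  rw [← hTmk u v, ← hTmk u' v', ← scale_mk, fderiv_fderiv_map_apply_of_comp_eq hdiff hdiff2 hT]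

theorem sum_fderiv_fderiv_scale_diag (hdiff : Differentiable ℝ L)
    (hdiff2 : Differentiable ℝ (fderiv ℝ L))
    (hinv : ∀ α : ℝ, 0 < α → ∀ (u : EuclideanSpace ℝ (Fin n₁)) (v : EuclideanSpace ℝ (Fin n₂)),
      L (mk (α • u) (α⁻¹ • v)) = L (mk u v))
    {α : ℝ} (hα : 0 < α) (θ₁ : EuclideanSpace ℝ (Fin n₁)) (θ₂ : EuclideanSpace ℝ (Fin n₂)) :
    let H := fderiv ℝ (fderiv ℝ L)
    ((∑ i, H (mk (α • θ₁) (α⁻¹ • θ₂)) (mk (EuclideanSpace.single i 1) 0)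
          (mk (EuclideanSpace.single i 1) 0)) +
        ∑ j, H (mk (α • θ₁) (α⁻¹ • θ₂)) (mk 0 (EuclideanSpace.single j 1))
          (mk 0 (EuclideanSpace.single j 1))) =
      α⁻¹ ^ 2 * (∑ i, H (mk θ₁ θ₂) (mk (EuclideanSpace.single i 1) 0)
          (mk (EuclideanSpace.single i 1) 0)) +
        α ^ 2 * ∑ j, H (mk θ₁ θ₂) (mk 0 (EuclideanSpace.single j 1))
          (mk 0 (EuclideanSpace.single j 1)) := by
  have hfst : ∀ u : EuclideanSpace ℝ (Fin n₁), (mk (α⁻¹ • u) (α • 0) : Param n₁ n₂) =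
      α⁻¹ • mk u 0 := fun u => by rw [smul_mk, smul_zero, smul_zero]
  have hsnd : ∀ v : EuclideanSpace ℝ (Fin n₂), (mk (α⁻¹ • 0) (α • v) : Param n₁ n₂) =
      α • mk 0 v := fun v => by rw [smul_mk, smul_zero, smul_zero]
  simp only [fderiv_fderiv_mk_smul_inv_smul hdiff hdiff2 hinv hα, hfst, hsnd, map_smul,
    smul_apply, smul_eq_mul, Finset.mul_sum]
  congr 1 <;> exact Finset.sum_congr rfl fun _ _ => by ring

end Param

theorem hessian_trace_unbounded_general (n₁ n₂ : ℕ) (L : Param n₁ n₂ → ℝ)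
    (hdiff : Differentiable ℝ L) (hdiff2 : Differentiable ℝ (fderiv ℝ L))
    (hinv : ∀ α : ℝ, 0 < α → ∀ (u : EuclideanSpace ℝ (Fin n₁))
      (v : EuclideanSpace ℝ (Fin n₂)),
      L (Param.mk (α • u) (α⁻¹ • v)) = L (Param.mk u v))
    (θ₁ : EuclideanSpace ℝ (Fin n₁)) (θ₂ : EuclideanSpace ℝ (Fin n₂))
    (hpsd : ∀ w : Param n₁ n₂, 0 ≤ fderiv ℝ (fderiv ℝ L) (Param.mk θ₁ θ₂) w w)
    (hnz : fderiv ℝ (fderiv ℝ L) (Param.mk θ₁ θ₂) ≠ 0)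
    (M : ℝ) :
    ∃ α : ℝ, 0 < α ∧
      M ≤ (∑ i : Fin n₁,
            fderiv ℝ (fderiv ℝ L) (Param.mk (α • θ₁) (α⁻¹ • θ₂))
              (Param.mk (EuclideanSpace.single i 1) 0)
              (Param.mk (EuclideanSpace.single i 1) 0)) +
          ∑ j : Fin n₂,
            fderiv ℝ (fderiv ℝ L) (Param.mk (α • θ₁) (α⁻¹ • θ₂))
              (Param.mk 0 (EuclideanSpace.single j 1))
              (Param.mk 0 (EuclideanSpace.single j 1)) := by
  set H := fderiv ℝ (fderiv ℝ L) (Param.mk θ₁ θ₂)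
  have hsymm : ∀ v w, H v w = H w v :=
    second_derivative_symmetric (fun y => (hdiff y).hasFDerivAt) (hdiff2 _).hasFDerivAt
  have htrace := H.sum_apply_basis_self_pos hsymm hpsd hnz (Param.stdBasis n₁ n₂)
  simp only [Fintype.sum_sum_type, Param.stdBasis_inl, Param.stdBasis_inr] at htrace
  obtain ⟨α, hα, hM⟩ := exists_le_inv_sq_mul_add_sq_mul
    (Finset.sum_nonneg fun i _ => hpsd _) (Finset.sum_nonneg fun j _ => hpsd _) htrace M
  exact ⟨α, hα, (Param.sum_fderiv_fderiv_scale_diag hdiff hdiff2 hinv hα θ₁ θ₂).symm ▸ hM⟩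

/-- If `L` is twice differentiable, invariant under all `α`-scale
transformations, and its Hessian at `θ = (θ₁, θ₂)` is positive semi-definite
and nonzero, then for every `M > 0` there is `α > 0` such that the trace of
the Hessian matrix of `L` at `T_α(θ) = (αθ₁, α⁻¹θ₂)` (the sum of the diagonal
entries of the Hessian bilinear form in the standard basis) is at least `M`. -/
theorem hessian_trace_unbounded (n₁ n₂ : ℕ) (L : Param n₁ n₂ → ℝ)
    (hdiff : Differentiable ℝ L) (hdiff2 : Differentiable ℝ (fderiv ℝ L))
    (hinv : ∀ α : ℝ, 0 < α → ∀ (u : EuclideanSpace ℝ (Fin n₁))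
      (v : EuclideanSpace ℝ (Fin n₂)),
      L (Param.mk (α • u) (α⁻¹ • v)) = L (Param.mk u v))
    (θ₁ : EuclideanSpace ℝ (Fin n₁)) (θ₂ : EuclideanSpace ℝ (Fin n₂))
    (hpsd : ∀ w : Param n₁ n₂, 0 ≤ fderiv ℝ (fderiv ℝ L) (Param.mk θ₁ θ₂) w w)
    (hnz : fderiv ℝ (fderiv ℝ L) (Param.mk θ₁ θ₂) ≠ 0)
    (M : ℝ) (hM : 0 < M) :
    ∃ α : ℝ, 0 < α ∧
      M ≤ (∑ i : Fin n₁,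
            fderiv ℝ (fderiv ℝ L) (Param.mk (α • θ₁) (α⁻¹ • θ₂))
              (Param.mk (EuclideanSpace.single i 1) 0)
              (Param.mk (EuclideanSpace.single i 1) 0)) +
          ∑ j : Fin n₂,
            fderiv ℝ (fderiv ℝ L) (Param.mk (α • θ₁) (α⁻¹ • θ₂))
              (Param.mk 0 (EuclideanSpace.single j 1))
              (Param.mk 0 (EuclideanSpace.single j 1)) :=
  hessian_trace_unbounded_general n₁ n₂ L hdiff hdiff2 hinv θ₁ θ₂ hpsd hnz M
end

section
/- Let H be an n×n real symmetric positive semi-definite matrix of rank r, and let the index set {1,…,n} be partitioned into K blocks of sizes n₁,…,n_K. Then for every M > 0 there exist positive reals α₁,…,α_K with ∏_{k=1}^K α_k = 1 such that, writing D_α for the diagonal matrix whose entries equal α_k⁻¹ on block k, the matrix D_α H D_α has at least r − min_{k ≤ K} n_k eigenvalues strictly greater than M. -/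
/-!
Let `k₀` be a smallest block and `P` the coordinate projection killing block `k₀`. Scale every
other block by `t` (`α k = t⁻¹`) and block `k₀` by `t^{-(K-1)}`, so that `∏ α k = 1`. On vectors
fixed by `P` the quadratic form of `D_α H D_α` is `t²` times that of `PHP`, and since `H` is
positive semidefinite, `rank (PHP) ≥ r - n k₀`. On the span of the eigenvectors of `PHP` with
nonzero eigenvalue this form is at least `t² μ ‖x‖²`, `μ` the least such eigenvalue, so for `t`
large the min-max principle gives `rank (PHP)` eigenvalues of `D_α H D_α` above `M`.
-/

open Matrix Module Finset
open scoped InnerProductSpace MatrixOrder ComplexOrder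

theorem Matrix.rank_add_le {m n 𝕜 : Type*} [Fintype n] [Field 𝕜] (A B : Matrix m n 𝕜) :
    (A + B).rank ≤ A.rank + B.rank := by
  unfold rank
  rw [mulVecLin_add]
  exact (Submodule.finrank_mono (LinearMap.range_add_le A.mulVecLin B.mulVecLin)).trans
    (Submodule.finrank_add_le_finrank_add_finrank _ _)

theorem Matrix.PosSemidef.rank_le_rank_conjTranspose_mul_mul_add {m 𝕜 : Type*} [Fintype m]
    [DecidableEq m] [RCLike 𝕜] {A : Matrix m m 𝕜} (hA : A.PosSemidef) (P : Matrix m m 𝕜) :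
    A.rank ≤ (Pᴴ * A * P).rank + (1 - P).rank := by
  obtain ⟨B, rfl⟩ := CStarAlgebra.nonneg_iff_eq_star_mul_self.mp hA.nonneg
  rw [star_eq_conjTranspose, rank_conjTranspose_mul_self, ← mul_assoc, ← conjTranspose_mul,
    mul_assoc, rank_conjTranspose_mul_self]
  calc B.rank = (B * P + B * (1 - P)).rank := by rw [← mul_add, add_sub_cancel, mul_one]
    _ ≤ (B * P).rank + (B * (1 - P)).rank := rank_add_le _ _
    _ ≤ (B * P).rank + (1 - P).rank := by gcongr; exact rank_mul_le_right _ _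

theorem LinearIndependent.finrank_span_image_finset {ι R M : Type*} [Ring R] [Nontrivial R]
    [StrongRankCondition R] [AddCommGroup M] [Module R M] {v : ι → M}
    (hv : LinearIndependent R v) (T : Finset ι) :
    finrank R (Submodule.span R (v '' T)) = #T := by
  classical
  rw [← coe_image, finrank_span_finset_eq_card, card_image_of_injective _ hv.injective]
  rw [coe_image]
  exact (hv.linearIndepOn T).id_image

theorem Orthonormal.inner_eq_zero_of_mem_span_image {ι 𝕜 E : Type*} [RCLike 𝕜]
    [NormedAddCommGroup E] [InnerProductSpace 𝕜 E] {v : ι → E} (hv : Orthonormal 𝕜 v)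
    {s : Set ι} {x : E} (hx : x ∈ Submodule.span 𝕜 (v '' s)) {i : ι} (hi : i ∉ s) :
    ⟪v i, x⟫_𝕜 = 0 := by
  obtain ⟨l, hl, rfl⟩ := (Finsupp.mem_span_image_iff_linearCombination 𝕜).mp hx
  rw [← inner_conj_symm, hv.inner_finsupp_eq_zero hi hl, map_zero]

theorem exists_pos_le_of_ne_zero {ι : Type*} [Fintype ι] (f : ι → ℝ)
    (hf : ∀ i, 0 ≤ f i) :
    ∃ μ > 0, ∀ i, f i ≠ 0 → μ ≤ f i := by
  classical
  rcases (univ.filter fun i => f i ≠ 0).eq_empty_or_nonempty with h | h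
  · exact ⟨1, one_pos, fun i hi =>
      absurd (filter_eq_empty_iff.mp h (mem_univ i)) (not_not.mpr hi)⟩
  · obtain ⟨j, hj, hjmin⟩ := exists_min_image _ f h
    exact ⟨f j, lt_of_le_of_ne (hf j) (mem_filter.mp hj).2.symm,
      fun i hi => hjmin i (mem_filter.mpr ⟨mem_univ _, hi⟩)⟩

namespace Matrix

variable {m : Type*} [Fintype m] [DecidableEq m]

theorem inner_toEuclideanLin_conjTranspose_mul_mul {𝕜 : Type*} [RCLike 𝕜]
    (A B : Matrix m m 𝕜) (x : EuclideanSpace 𝕜 m) :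
    ⟪x, (Bᴴ * A * B).toEuclideanLin x⟫_𝕜 =
      ⟪B.toEuclideanLin x, A.toEuclideanLin (B.toEuclideanLin x)⟫_𝕜 := by
  rw [toLpLin_mul_same, toLpLin_mul_same, LinearMap.comp_apply, LinearMap.comp_apply,
    toEuclideanLin_conjTranspose_eq_adjoint, LinearMap.adjoint_inner_right]

theorem inner_toEuclideanLin_mul_mul_of_mul_eq_smul {A D P : Matrix m m ℝ} {t : ℝ}
    (hD : D.IsHermitian) (hDP : D * P = t • P) {x : EuclideanSpace ℝ m}
    (hx : P.toEuclideanLin x = x) :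
    ⟪x, (D * A * D).toEuclideanLin x⟫_ℝ = t ^ 2 * ⟪x, (Pᴴ * A * P).toEuclideanLin x⟫_ℝ := by
  have hDx : D.toEuclideanLin x = t • x := by
    rw [← hx, ← LinearMap.comp_apply, ← toLpLin_mul_same, hDP, map_smul, LinearMap.smul_apply]
  nth_rw 1 [← hD.eq]
  rw [inner_toEuclideanLin_conjTranspose_mul_mul, inner_toEuclideanLin_conjTranspose_mul_mul,
    hDx, hx, map_smul, real_inner_smul_left, real_inner_smul_right]
  ring

namespace IsHermitian

variable {A : Matrix m m ℝ} (hA : A.IsHermitian)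
include hA

theorem toEuclideanLin_eigenvectorBasis (i : m) :
    A.toEuclideanLin (hA.eigenvectorBasis i) = hA.eigenvalues i • hA.eigenvectorBasis i :=
  congrArg (WithLp.toLp 2) (hA.mulVec_eigenvectorBasis i)

theorem inner_eigenvectorBasis_toEuclideanLin (i : m) (x : EuclideanSpace ℝ m) :
    ⟪hA.eigenvectorBasis i, A.toEuclideanLin x⟫_ℝ =
      hA.eigenvalues i * ⟪hA.eigenvectorBasis i, x⟫_ℝ := by
  rw [← isSymmetric_toEuclideanLin_iff.mpr hA, hA.toEuclideanLin_eigenvectorBasis,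
    real_inner_smul_left]

theorem inner_toEuclideanLin_sub_mul_norm_sq (c : ℝ) (x : EuclideanSpace ℝ m) :
    ⟪x, A.toEuclideanLin x⟫_ℝ - c * ‖x‖ ^ 2 =
      ∑ i, (hA.eigenvalues i - c) * ⟪hA.eigenvectorBasis i, x⟫_ℝ ^ 2 := by
  rw [← hA.eigenvectorBasis.sum_inner_mul_inner, ← hA.eigenvectorBasis.sum_sq_inner_right,
    mul_sum, ← sum_sub_distrib]
  refine sum_congr rfl fun i _ => ?_
  rw [hA.inner_eigenvectorBasis_toEuclideanLin, real_inner_comm]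
  ring

theorem inner_toEuclideanLin_sub_mul_norm_sq_of_mem_span (c : ℝ) {T : Finset m}
    {x : EuclideanSpace ℝ m} (hx : x ∈ Submodule.span ℝ (hA.eigenvectorBasis '' T)) :
    ⟪x, A.toEuclideanLin x⟫_ℝ - c * ‖x‖ ^ 2 =
      ∑ i ∈ T, (hA.eigenvalues i - c) * ⟪hA.eigenvectorBasis i, x⟫_ℝ ^ 2 := by
  rw [hA.inner_toEuclideanLin_sub_mul_norm_sq]
  refine (sum_subset (subset_univ T) fun j _ hj => ?_).symm
  rw [hA.eigenvectorBasis.orthonormal.inner_eq_zero_of_mem_span_image hx (mem_coe.not.mpr hj)]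
  ring

theorem inner_toEuclideanLin_le_of_mem_span {c : ℝ} {T : Finset m}
    (hT : ∀ i ∈ T, hA.eigenvalues i ≤ c) {x : EuclideanSpace ℝ m}
    (hx : x ∈ Submodule.span ℝ (hA.eigenvectorBasis '' T)) :
    ⟪x, A.toEuclideanLin x⟫_ℝ ≤ c * ‖x‖ ^ 2 := by
  have hsum := hA.inner_toEuclideanLin_sub_mul_norm_sq_of_mem_span c hx
  have : ∑ i ∈ T, (hA.eigenvalues i - c) * ⟪hA.eigenvectorBasis i, x⟫_ℝ ^ 2 ≤ 0 :=
    sum_nonpos fun i hi => mul_nonpos_of_nonpos_of_nonneg (by linarith [hT i hi]) (sq_nonneg _)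
  linarith

theorem le_inner_toEuclideanLin_of_mem_span {c : ℝ} {T : Finset m}
    (hT : ∀ i ∈ T, c ≤ hA.eigenvalues i) {x : EuclideanSpace ℝ m}
    (hx : x ∈ Submodule.span ℝ (hA.eigenvectorBasis '' T)) :
    c * ‖x‖ ^ 2 ≤ ⟪x, A.toEuclideanLin x⟫_ℝ := by
  have hsum := hA.inner_toEuclideanLin_sub_mul_norm_sq_of_mem_span c hx
  have : 0 ≤ ∑ i ∈ T, (hA.eigenvalues i - c) * ⟪hA.eigenvectorBasis i, x⟫_ℝ ^ 2 :=
    sum_nonneg fun i hi => mul_nonneg (by linarith [hT i hi]) (sq_nonneg _)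
  linarith

/-- The easy half of the Courant–Fischer min-max principle: `V` meets the span of the
eigenvectors with eigenvalue `≤ M` only in `0`. -/
theorem finrank_le_card_eigenvalues_gt {M : ℝ} (V : Submodule ℝ (EuclideanSpace ℝ m))
    (hV : ∀ x ∈ V, x ≠ 0 → M * ‖x‖ ^ 2 < ⟪x, A.toEuclideanLin x⟫_ℝ) :
    finrank ℝ V ≤ #{i | M < hA.eigenvalues i} := by
  have hVW : Disjoint V
      (Submodule.span ℝ
        (hA.eigenvectorBasis '' ↑(univ.filter fun i => ¬ M < hA.eigenvalues i))) := by
    refine Submodule.disjoint_def.mpr fun x hxV hxW => by_contra fun hx => ?_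
    have := hA.inner_toEuclideanLin_le_of_mem_span
      (fun i hi => not_lt.mp (mem_filter.mp hi).2) hxW
    linarith [hV x hxV hx]
  have hdim := Submodule.finrank_add_finrank_le_of_disjoint hVW
  rw [hA.eigenvectorBasis.orthonormal.linearIndependent.finrank_span_image_finset,
    finrank_euclideanSpace, ← card_univ,
    ← card_filter_add_card_filter_not (s := univ) (fun i => M < hA.eigenvalues i)] at hdim
  omega

theorem toEuclideanLin_eq_self_of_mem_span {P : Matrix m m ℝ} (hPA : P * A = A)
    {x : EuclideanSpace ℝ m}
    (hx : x ∈ Submodule.span ℝ (hA.eigenvectorBasis '' ↑({i | hA.eigenvalues i ≠ 0} : Finset m))) :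
    P.toEuclideanLin x = x := by
  suffices Submodule.span ℝ (hA.eigenvectorBasis '' ↑({i | hA.eigenvalues i ≠ 0} : Finset m)) ≤
      LinearMap.eqLocus P.toEuclideanLin LinearMap.id from this hx
  refine Submodule.span_le.mpr ?_
  rintro _ ⟨i, hi, rfl⟩
  have hb : hA.eigenvectorBasis i =
      (hA.eigenvalues i)⁻¹ • A.toEuclideanLin (hA.eigenvectorBasis i) := by
    rw [hA.toEuclideanLin_eigenvectorBasis, inv_smul_smul₀ (mem_filter.mp hi).2]
  change P.toEuclideanLin _ = _
  rw [hb, map_smul, ← LinearMap.comp_apply, ← toLpLin_mul_same, hPA]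
  rfl

end IsHermitian

theorem PosSemidef.rank_le_rank_conjTranspose_diagonal_mul_mul_add_card {H : Matrix m m ℝ}
    (hH : H.PosSemidef) (R : m → Prop) [DecidablePred R] :
    H.rank ≤ ((diagonal fun i => if R i then (0 : ℝ) else 1)ᴴ * H *
      diagonal fun i => if R i then 0 else 1).rank + Fintype.card {i // R i} := by
  have h1P : (1 - diagonal fun i => if R i then (0 : ℝ) else 1) =
      diagonal fun i => if R i then 1 else 0 := by
    rw [← diagonal_one, diagonal_sub]
    congr 1; ext i; by_cases h : R i <;> simp [h]
  have := hH.rank_le_rank_conjTranspose_mul_mul_add (diagonal fun i => if R i then 0 else 1)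
  rwa [h1P, rank_diagonal, Fintype.card_congr (Equiv.subtypeEquivRight (q := R) fun i => by
    by_cases h : R i <;> simp [h])] at this

theorem PosSemidef.exists_forall_diagonal_rank_sub_card_le {H : Matrix m m ℝ} (hH : H.PosSemidef)
    (R : m → Prop) [DecidablePred R] (M : ℝ) :
    ∃ t > 0, ∀ d : m → ℝ, (∀ i, ¬ R i → d i = t) →
      ∀ hHerm : (diagonal d * H * diagonal d).IsHermitian,
        H.rank - Fintype.card {i // R i} ≤ #{i | M < hHerm.eigenvalues i} := by
  have hrank := hH.rank_le_rank_conjTranspose_diagonal_mul_mul_add_card R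
  set P : Matrix m m ℝ := diagonal fun i => if R i then 0 else 1
  have hPP : P * Pᴴ = Pᴴ := by
    simp only [P, diagonal_conjTranspose, diagonal_mul_diagonal]
    congr 1; ext i; by_cases h : R i <;> simp [h]
  have hG := hH.conjTranspose_mul_mul_same P
  obtain ⟨μ, hμ, hμle⟩ := exists_pos_le_of_ne_zero _ hG.eigenvalues_nonneg
  set t := √((|M| + 1) / μ)
  have hMt : M < t ^ 2 * μ := by
    rw [Real.sq_sqrt (by positivity), div_mul_cancel₀ _ hμ.ne']
    linarith [le_abs_self M]
  refine ⟨t, Real.sqrt_pos.mpr (by positivity), fun d hd hHerm => ?_⟩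
  have hDP : diagonal d * P = t • P := by
    rw [diagonal_mul_diagonal, ← diagonal_smul]
    congr 1; ext i; by_cases h : R i <;> simp [h, hd]
  have hPG : P * (Pᴴ * H * P) = Pᴴ * H * P := by rw [← mul_assoc, ← mul_assoc, hPP]
  set V := Submodule.span ℝ
    (hG.1.eigenvectorBasis '' ↑({i | hG.1.eigenvalues i ≠ 0} : Finset m))
  have hV : finrank ℝ V = (Pᴴ * H * P).rank := by
    rw [hG.1.eigenvectorBasis.orthonormal.linearIndependent.finrank_span_image_finset,
      hG.1.rank_eq_card_non_zero_eigs, Fintype.card_subtype]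
  have hcount := hHerm.finrank_le_card_eigenvalues_gt V fun x hx hx0 => by
    rw [inner_toEuclideanLin_mul_mul_of_mul_eq_smul (isHermitian_diagonal d) hDP
      (hG.1.toEuclideanLin_eq_self_of_mem_span hPG hx)]
    calc M * ‖x‖ ^ 2 < t ^ 2 * μ * ‖x‖ ^ 2 := by gcongr
      _ = t ^ 2 * (μ * ‖x‖ ^ 2) := by ring
      _ ≤ t ^ 2 * ⟪x, (Pᴴ * H * P).toEuclideanLin x⟫_ℝ := by
        gcongr
        exact hG.1.le_inner_toEuclideanLin_of_mem_span (fun i hi => hμle i (mem_filter.mp hi).2) hx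
  omega

end Matrix

theorem rescaled_hessian_many_large_eigenvalues_general
    (K : ℕ) (hK : 0 < K) (n : Fin K → ℕ)
    (H : Matrix ((k : Fin K) × Fin (n k)) ((k : Fin K) × Fin (n k)) ℝ)
    (hpsd : H.PosSemidef)
    (r : ℕ) (hr : H.rank = r) (M : ℝ) :
    ∃ α : Fin K → ℝ, (∀ k, 0 < α k) ∧ (∏ k, α k = 1) ∧
      ∀ hHerm : (Matrix.diagonal (fun i : (k : Fin K) × Fin (n k) => (α i.1)⁻¹) * H *
          Matrix.diagonal (fun i : (k : Fin K) × Fin (n k) => (α i.1)⁻¹)).IsHermitian,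
        r - Finset.univ.inf' ⟨⟨0, hK⟩, Finset.mem_univ _⟩ n ≤
          (Finset.univ.filter (fun i => M < hHerm.eigenvalues i)).card := by
  obtain ⟨k₀, -, hk₀⟩ := exists_mem_eq_inf' ⟨⟨0, hK⟩, mem_univ _⟩ n
  obtain ⟨t, ht, hcount⟩ := hpsd.exists_forall_diagonal_rank_sub_card_le (·.1 = k₀) M
  refine ⟨fun k => if k = k₀ then t ^ (K - 1) else t⁻¹, fun k => by positivity,
    ?_, fun hHerm => ?_⟩
  · rw [prod_ite, filter_eq', filter_ne']
    simp [ht.ne']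
  · have := hcount _ (fun i hi => by simp [hi]) hHerm
    rwa [hr, Fintype.card_congr (Equiv.sigmaSubtype k₀), Fintype.card_fin, ← hk₀] at this

/-- Let `H` be a real symmetric positive semi-definite matrix of rank `r`, with
index set partitioned into `K` blocks of sizes `n 0, …, n (K-1)`. Then for every
`M > 0` there are positive reals `α 0, …, α (K-1)` with product `1` such that,
for `D_α` the diagonal matrix with entries `(α k)⁻¹` on block `k`, the matrix
`D_α H D_α` has at least `r − min_k n k` eigenvalues strictly greater than
`M`. -/
theorem rescaled_hessian_many_large_eigenvalues
    (K : ℕ) (hK : 0 < K) (n : Fin K → ℕ)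
    (H : Matrix ((k : Fin K) × Fin (n k)) ((k : Fin K) × Fin (n k)) ℝ)
    (hsymm : H.IsSymm) (hpsd : H.PosSemidef)
    (r : ℕ) (hr : H.rank = r) (M : ℝ) (hM : 0 < M) :
    ∃ α : Fin K → ℝ, (∀ k, 0 < α k) ∧ (∏ k, α k = 1) ∧
      ∀ hHerm : (Matrix.diagonal (fun i : (k : Fin K) × Fin (n k) => (α i.1)⁻¹) * H *
          Matrix.diagonal (fun i : (k : Fin K) × Fin (n k) => (α i.1)⁻¹)).IsHermitian,
        r - Finset.univ.inf' ⟨⟨0, hK⟩, Finset.mem_univ _⟩ n ≤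
          (Finset.univ.filter (fun i => M < hHerm.eigenvalues i)).card :=
  rescaled_hessian_many_large_eigenvalues_general K hK n H hpsd r hr M
end

section
/- Let L : ℝ^{n₁} × ℝ^{n₂} → ℝ be differentiable and invariant under all α-scale transformations (L(αu, α⁻¹v) = L(u, v) for all α > 0). Then for every θ = (θ₁, θ₂) and every α > 0, the squared norm of the gradient of L at (αθ₁, α⁻¹θ₂) equals α⁻²‖∇_{θ₁}L(θ₁, θ₂)‖₂² + α²‖∇_{θ₂}L(θ₁, θ₂)‖₂², where ∇_{θ₁}L and ∇_{θ₂}L denote the gradients with respect to the first and second components. -/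
/-!
Invariance under `T_α` says that `u ↦ L(u, α⁻¹θ₂)` is `u ↦ L(α⁻¹u, θ₂)`, so by the chain rule
the first component of `∇L(αθ₁, α⁻¹θ₂)` is `α⁻¹ ∇_{θ₁}L(θ₁, θ₂)`; symmetrically its second
component is `α ∇_{θ₂}L(θ₁, θ₂)`. The squared norm on the `L²` product is the sum of the squared
norms of the components.
-/

open InnerProductSpace WithLp ComplexConjugate
open scoped Gradient

section
variable {𝕜 E F : Type*} [RCLike 𝕜] [NormedAddCommGroup E] [InnerProductSpace 𝕜 E]
  [CompleteSpace E] [NormedAddCommGroup F] [InnerProductSpace 𝕜 F] [CompleteSpace F]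

theorem gradient_comp_smul (f : E → 𝕜) (c : 𝕜) (x : E) :
    ∇ (fun y => f (c • y)) x = conj c • ∇ f (c • x) := by
  simp only [gradient, fderiv_comp_smul, map_smulₛₗ]

theorem WithLp.fst_gradient {f : WithLp 2 (E × F) → 𝕜} {x : E} {y : F}
    (hf : DifferentiableAt 𝕜 f (toLp 2 (x, y))) :
    (∇ f (toLp 2 (x, y))).fst = ∇ (fun u => f (toLp 2 (u, y))) x := by
  have hι : HasFDerivAt (fun u => toLp 2 (u, y))
      ((prodContinuousLinearEquiv 2 𝕜 E F).symm ∘L .inl 𝕜 E F) x :=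
    (prodContinuousLinearEquiv 2 𝕜 E F).symm.hasFDerivAt.comp x
      ((hasFDerivAt_id x).prodMk (hasFDerivAt_const y x))
  have hpartial : HasFDerivAt (fun u => f (toLp 2 (u, y))) _ x := hf.hasFDerivAt.comp x hι
  refine ext_inner_right 𝕜 fun w => ?_
  rw [gradient, gradient, toDual_symm_apply, hpartial.fderiv]
  have hinner := toDual_symm_apply (x := toLp 2 (w, (0 : F))) (y := fderiv 𝕜 f (toLp 2 (x, y)))
  rwa [prod_inner_apply, inner_zero_right, add_zero] at hinner

theorem WithLp.snd_gradient {f : WithLp 2 (E × F) → 𝕜} {x : E} {y : F}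
    (hf : DifferentiableAt 𝕜 f (toLp 2 (x, y))) :
    (∇ f (toLp 2 (x, y))).snd = ∇ (fun v => f (toLp 2 (x, v))) y := by
  have hι : HasFDerivAt (fun v => toLp 2 (x, v))
      ((prodContinuousLinearEquiv 2 𝕜 E F).symm ∘L .inr 𝕜 E F) y :=
    (prodContinuousLinearEquiv 2 𝕜 E F).symm.hasFDerivAt.comp y
      ((hasFDerivAt_const x y).prodMk (hasFDerivAt_id y))
  have hpartial : HasFDerivAt (fun v => f (toLp 2 (x, v))) _ y := hf.hasFDerivAt.comp y hι
  refine ext_inner_right 𝕜 fun w => ?_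
  rw [gradient, gradient, toDual_symm_apply, hpartial.fderiv]
  have hinner := toDual_symm_apply (x := toLp 2 ((0 : E), w)) (y := fderiv 𝕜 f (toLp 2 (x, y)))
  rwa [prod_inner_apply, inner_zero_right, zero_add] at hinner

end

/-- If `L` is differentiable and invariant under all `α`-scale transformations,
then the squared norm of the gradient of `L` at `(αθ₁, α⁻¹θ₂)` equals
`α⁻²‖∇_{θ₁}L(θ₁, θ₂)‖₂² + α²‖∇_{θ₂}L(θ₁, θ₂)‖₂²`. -/
theorem gradient_norm_sq_alpha_scale (n₁ n₂ : ℕ) (L : Param n₁ n₂ → ℝ)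
    (hdiff : Differentiable ℝ L)
    (hinv : ∀ α : ℝ, 0 < α → ∀ (u : EuclideanSpace ℝ (Fin n₁))
      (v : EuclideanSpace ℝ (Fin n₂)),
      L (Param.mk (α • u) (α⁻¹ • v)) = L (Param.mk u v))
    (θ₁ : EuclideanSpace ℝ (Fin n₁)) (θ₂ : EuclideanSpace ℝ (Fin n₂))
    (α : ℝ) (hα : 0 < α) :
    ‖gradient L (Param.mk (α • θ₁) (α⁻¹ • θ₂))‖ ^ 2 =
      α⁻¹ ^ 2 * ‖gradient (fun u => L (Param.mk u θ₂)) θ₁‖ ^ 2 +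
      α ^ 2 * ‖gradient (fun v => L (Param.mk θ₁ v)) θ₂‖ ^ 2 := by
  simp only [Param.mk, equiv_symm_apply] at hinv ⊢
  have hinv₁ : (fun u => L (toLp 2 (u, α⁻¹ • θ₂))) = fun u => L (toLp 2 (α⁻¹ • u, θ₂)) :=
    funext fun u => by simpa [smul_smul, hα.ne'] using hinv α hα (α⁻¹ • u) θ₂
  have hinv₂ : (fun v => L (toLp 2 (α • θ₁, v))) = fun v => L (toLp 2 (θ₁, α • v)) :=
    funext fun v => by simpa [smul_smul, hα.ne'] using hinv α hα θ₁ (α • v)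
  rw [prod_norm_sq_eq_of_L2, fst_gradient (hdiff _), snd_gradient (hdiff _), hinv₁, hinv₂,
    gradient_comp_smul (fun u => L (toLp 2 (u, θ₂))),
    gradient_comp_smul (fun v => L (toLp 2 (θ₁, v))), inv_smul_smul₀ hα.ne',
    smul_inv_smul₀ hα.ne', norm_smul, norm_smul]
  simp [mul_pow, abs_of_pos hα]
end

section
/- Let L : ℝ^{n₁} × ℝ^{n₂} → ℝ be differentiable everywhere and invariant under all α-scale transformations (L(αu, α⁻¹v) = L(u, v) for all α > 0). If L is not constant, then L is not Lipschitz continuous: for every K ≥ 0, L is not K-Lipschitz. -/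
/-- If `L` is differentiable, invariant under all `α`-scale transformations,
and not constant, then `L` is not Lipschitz continuous: for every `K ≥ 0`,
`L` is not `K`-Lipschitz. -/
theorem invariant_loss_not_lipschitz (n₁ n₂ : ℕ)
    (L : (Fin n₁ → ℝ) × (Fin n₂ → ℝ) → ℝ) (hdiff : Differentiable ℝ L)
    (hinv : ∀ α : ℝ, 0 < α → ∀ (u : Fin n₁ → ℝ) (v : Fin n₂ → ℝ),
      L (α • u, α⁻¹ • v) = L (u, v))
    (hnonconst : ∃ θ θ' : (Fin n₁ → ℝ) × (Fin n₂ → ℝ), L θ ≠ L θ') :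
    ∀ K : ℝ, 0 ≤ K →
      ¬ ∀ θ θ' : (Fin n₁ → ℝ) × (Fin n₂ → ℝ), |L θ - L θ'| ≤ K * ‖θ - θ'‖ := by
  intro K hK h
  have tend : ∀ c : ℝ, Filter.Tendsto (fun α : ℝ => c / α) Filter.atTop (nhds 0) :=
    fun c => tendsto_const_nhds.div_atTop Filter.tendsto_id
  have abs_le_zero : ∀ a c : ℝ, (∀ α : ℝ, 0 < α → |a| ≤ c / α) → a = 0 := by
    intro a c ha
    have : |a| ≤ 0 := ge_of_tendsto (tend c)
      ((Filter.eventually_gt_atTop 0).mono fun α hα => ha α hα)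
    exact abs_nonpos_iff.mp this
  have h1 : ∀ (u : Fin n₁ → ℝ) (v : Fin n₂ → ℝ), L (u, v) = L (u, 0) := by
    intro u v
    have key : ∀ α : ℝ, 0 < α → |L (u, v) - L (u, 0)| ≤ K * ‖v‖ / α := by
      intro α hα
      have e1 : L (u, v) = L (α • u, α⁻¹ • v) := (hinv α hα u v).symm
      have e2 : L (u, 0) = L (α • u, (0 : Fin n₂ → ℝ)) := by
        have := hinv α hα u 0
        rw [smul_zero] at this
        exact this.symm
      rw [e1, e2]
      have hdiffeq : ((α • u, α⁻¹ • v) : (Fin n₁ → ℝ) × (Fin n₂ → ℝ)) -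
          (α • u, (0 : Fin n₂ → ℝ)) = ((0 : Fin n₁ → ℝ), α⁻¹ • v) := by
        ext <;> simp
      calc |L (α • u, α⁻¹ • v) - L (α • u, (0 : Fin n₂ → ℝ))|
          ≤ K * ‖((α • u, α⁻¹ • v) : (Fin n₁ → ℝ) × (Fin n₂ → ℝ)) -
              (α • u, (0 : Fin n₂ → ℝ))‖ := h _ _
        _ = K * ‖v‖ / α := by
            rw [hdiffeq, Prod.norm_def]
            simp only [norm_zero, norm_smul, Real.norm_eq_abs, abs_of_pos hα,
              abs_of_pos (inv_pos.mpr hα)]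
            rw [sup_eq_right.mpr (by positivity)]
            field_simp
    have hnorm : ‖L (u, v) - L (u, 0)‖ = |L (u, v) - L (u, 0)| := rfl
    have := abs_le_zero (L (u, v) - L (u, 0)) (K * ‖v‖) key
    linarith
  have h2 : ∀ u : Fin n₁ → ℝ, L (u, 0) = L (0, 0) := by
    intro u
    have key : ∀ β : ℝ, 0 < β → |L (u, 0) - L (0, 0)| ≤ K * ‖u‖ / β := by
      intro β hβ
      have hβ' : (0 : ℝ) < β⁻¹ := inv_pos.mpr hβ
      have e1 : L (u, 0) = L (β⁻¹ • u, (0 : Fin n₂ → ℝ)) := by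
        have := hinv β⁻¹ hβ' u 0
        rw [smul_zero] at this
        exact this.symm
      rw [e1]
      have hdiffeq : ((β⁻¹ • u, (0 : Fin n₂ → ℝ)) : (Fin n₁ → ℝ) × (Fin n₂ → ℝ)) -
          (0, 0) = (β⁻¹ • u, (0 : Fin n₂ → ℝ)) := by ext <;> simp
      calc |L (β⁻¹ • u, (0 : Fin n₂ → ℝ)) - L (0, 0)|
          ≤ K * ‖((β⁻¹ • u, (0 : Fin n₂ → ℝ)) : (Fin n₁ → ℝ) × (Fin n₂ → ℝ)) -
              (0, 0)‖ := h _ _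
        _ = K * ‖u‖ / β := by
            rw [hdiffeq, Prod.norm_def]
            simp only [norm_zero, norm_smul, Real.norm_eq_abs,
              abs_of_pos (inv_pos.mpr hβ)]
            rw [sup_eq_left.mpr (by positivity)]
            field_simp
    have hnorm : ‖L (u, 0) - L (0, 0)‖ = |L (u, 0) - L (0, 0)| := rfl
    have := abs_le_zero (L (u, 0) - L (0, 0)) (K * ‖u‖) key
    linarith
  obtain ⟨θ, θ', hne⟩ := hnonconst
  apply hne
  calc L θ = L (θ.1, θ.2) := by rfl
    _ = L (0, 0) := by rw [h1, h2]
    _ = L (θ'.1, θ'.2) := ((h1 θ'.1 θ'.2).trans (h2 θ'.1)).symm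
    _ = L θ' := by rfl
end
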